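/- Let i be a nonnegative integer and let α, β be complex numbers with β ≠ 0. Assume that (β)_{m+n} and (α/2)_n are nonzero for all nonnegative integers m, n, that no argument of Γ appearing on the right-hand side below is a nonpositive integer, and that the double series defining the Kampé de Fériet function converges absolutely. Then F^{1:1;2}_{1:0;1}[α : β/2+2−i ; β/2−2+i, α/2+1 ; β : — ; α/2 ; 1/2, 1/2] = 2^{α+3−i} / β · Σ_{r=0}^{i} C(i,r) · Γ(β/4+(r+1)/2) / Γ(β/4+(r−1)/2). -/

import Mathlib

/-!
Since `(α/2 + 1)ₙ / (α/2)ₙ = 1 + 2n/α`, each diagonal `m + n = N` of the double series is a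
Chu–Vandermonde sum: with `b = β/2 - 2 + i` and `ε + b = β` it equals
`(α)_N / N! · 2^{-N} · (1 + 2bN/(αβ))`. The weight `N` is absorbed by
`N (a)_N = a ((a+1)_N - (a)_N)`, so the diagonal sums add up to two binomial series
`∑ (a)_N / N! · z^N = (1 - z)^{-a}` at `z = 1/2`, and the series equals `2^α (1 + 2b/β)`.
On the right, `Γ(z + 1) / Γ(z) = z` turns the Gamma quotients into
`∑ C(i,r) (β/4 + (r-1)/2) = 2^i (β - 2 + i) / 4`.
-/

open Complex

noncomputable section

/-- Pochhammer symbol `(a)_n = a (a+1) ⋯ (a+n-1)`. -/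
def poch (a : ℂ) (n : ℕ) : ℂ := ∏ k ∈ Finset.range n, (a + k)

/-- `z` is not a nonpositive integer. -/
def notNonposInt (z : ℂ) : Prop := ∀ n : ℕ, z ≠ -(n : ℂ)

/-- Term of the Kampé de Fériet double series `F^{1:1;2}_{1:0;1}`. -/
def kdfTerm (α ε b₁ b₂ β d₁ x y : ℂ) (p : ℕ × ℕ) : ℂ :=
  poch α (p.1 + p.2) * poch ε p.1 * poch b₁ p.2 * poch b₂ p.2 /
    (poch β (p.1 + p.2) * poch d₁ p.2) * x ^ p.1 * y ^ p.2 /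
    ((p.1.factorial : ℂ) * (p.2.factorial : ℂ))

open Finset Nat

theorem poch_zero (a : ℂ) : poch a 0 = 1 := prod_range_zero _

theorem poch_succ_right (a : ℂ) (n : ℕ) : poch a (n + 1) = poch a n * (a + n) :=
  prod_range_succ _ _

theorem poch_succ_left (a : ℂ) (n : ℕ) : poch a (n + 1) = a * poch (a + 1) n := by
  simp only [poch, prod_range_succ', Nat.cast_add, Nat.cast_one, CharP.cast_eq_zero, add_zero]
  rw [mul_comm]
  congr 1
  exact prod_congr rfl fun k _ => by ring

theorem mul_poch_add_one (a : ℂ) (n : ℕ) : a * poch (a + 1) n = poch a n * (a + n) := by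
  rw [← poch_succ_left, poch_succ_right]

theorem natCast_mul_poch (a : ℂ) (n : ℕ) : n * poch a n = a * (poch (a + 1) n - poch a n) := by
  linear_combination -mul_poch_add_one a n

theorem poch_eq_ascPochhammer_eval (a : ℂ) (n : ℕ) :
    poch a n = (ascPochhammer ℂ n).eval a := by
  induction n with
  | zero => simp [poch_zero]
  | succ n ih => simp [poch_succ_right, ascPochhammer_succ_right, ih]

theorem poch_div_factorial (a : ℂ) (n : ℕ) : poch a n / n ! = Ring.choose (a + n - 1) n := by
  rw [← Ring.multichoose_eq, div_eq_iff (mod_cast (factorial_ne_zero n)), mul_comm,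
    ← nsmul_eq_mul, Ring.factorial_nsmul_multichoose_eq_ascPochhammer,
    Polynomial.ascPochhammer_smeval_eq_eval, poch_eq_ascPochhammer_eval]

theorem poch_add (a b : ℂ) (n : ℕ) :
    poch (a + b) n =
      ∑ p ∈ antidiagonal n, (n.choose p.1 : ℂ) * (poch a p.1 * poch b p.2) := by
  induction n with
  | zero => simp [poch_zero]
  | succ n ih =>
    rw [sum_antidiagonal_choose_succ_mul (fun i j => poch a i * poch b j), poch_succ_right, ih,
      sum_mul, ← sum_add_distrib]
    refine sum_congr rfl fun p hp => ?_
    rw [HasAntidiagonal.mem_antidiagonal] at hp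
    rw [Nat.choose_symm_of_eq_add hp.symm, poch_succ_right, poch_succ_right, ← hp]
    push_cast
    ring

theorem hasSum_poch_div_factorial_mul_pow (a : ℂ) {z : ℂ} (hz : ‖z‖ < 1) :
    HasSum (fun n => poch a n / n ! * z ^ n) (1 / (1 - z) ^ a) := by
  have := (one_div_one_sub_cpow_hasFPowerSeriesOnBall_zero a).hasSum
    (y := z) (by simpa [← ofReal_norm] using hz)
  simpa [FormalMultilinearSeries.ofScalars_apply_eq, poch_div_factorial, mul_comm] using this

theorem HasSum.sum_antidiagonal {A M : Type*} [AddCommMonoid A] [HasAntidiagonal A]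
    [AddCommMonoid M] [TopologicalSpace M] [ContinuousAdd M] [RegularSpace M]
    {f : A × A → M} {a : M} (h : HasSum f a) :
    HasSum (fun n => ∑ p ∈ antidiagonal n, f p) a := by
  refine (HasAntidiagonal.sigmaAntidiagonalEquivProd.hasSum_iff.2 h).sigma fun n => ?_
  rw [← Finset.sum_coe_sort]
  exact hasSum_fintype _

theorem kdfTerm_add_one_self_eq (α ε b c β x : ℂ) (hc : ∀ n, poch c n ≠ 0) (k l : ℕ) :
    kdfTerm α ε b (c + 1) β c x x (k, l) =
      poch α (k + l) / poch β (k + l) * x ^ (k + l) / ((k + l)! * c) *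
        ((k + l).choose k * (poch ε k * ((c - b) * poch b l + b * poch (b + 1) l))) := by
  have hc0 : c ≠ 0 := by simpa [poch] using hc 1
  have hratio : (c - b) * poch b l + b * poch (b + 1) l =
      c * (poch b l * poch (c + 1) l / poch c l) := by
    field_simp [hc l]
    linear_combination -(poch b l * mul_poch_add_one c l + poch c l * natCast_mul_poch b l)
  have hfact : ((k + l).choose k : ℂ) * (k ! * l !) = (k + l)! := by
    rw [← mul_assoc, Nat.choose_symm_add]
    exact_mod_cast add_choose_mul_factorial_mul_factorial k l
  have hchoose : ((k + l).choose k : ℂ) ≠ 0 := mod_cast (choose_pos (le_add_right k l)).ne'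
  rw [hratio, ← hfact, kdfTerm]
  field_simp
  ring

theorem sum_antidiagonal_kdfTerm (α ε b c β x : ℂ) (hc : ∀ n, poch c n ≠ 0) (N : ℕ) :
    ∑ p ∈ antidiagonal N, kdfTerm α ε b (c + 1) β c x x p =
      poch α N / poch β N * x ^ N / (N ! * c) *
        ((c - b) * poch (ε + b) N + b * poch (ε + b + 1) N) := by
  rw [add_assoc, poch_add, poch_add, mul_sum, mul_sum, ← sum_add_distrib, mul_sum]
  refine sum_congr rfl fun ⟨k, l⟩ hkl => ?_
  rw [HasAntidiagonal.mem_antidiagonal] at hkl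
  rw [kdfTerm_add_one_self_eq α ε b c β x hc, hkl]
  ring

theorem hasSum_sum_antidiagonal_kdfTerm (α ε b c β : ℂ) {x : ℂ} (hx : ‖x‖ < 1)
    (hβ : ∀ n, poch β n ≠ 0) (hc : ∀ n, poch c n ≠ 0) (hεb : ε + b = β) :
    HasSum (fun N => ∑ p ∈ antidiagonal N, kdfTerm α ε b (c + 1) β c x x p)
      ((1 - b * α / (β * c)) / (1 - x) ^ α + b * α / (β * c) / (1 - x) ^ (α + 1)) := by
  set t := b * α / (β * c)
  have hβ0 : β ≠ 0 := by simpa [poch] using hβ 1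
  have hc0 : c ≠ 0 := by simpa [poch] using hc 1
  have hdiag : ∀ N, ∑ p ∈ antidiagonal N, kdfTerm α ε b (c + 1) β c x x p =
      (1 - t) * (poch α N / N ! * x ^ N) + t * (poch (α + 1) N / N ! * x ^ N) := by
    intro N
    rw [sum_antidiagonal_kdfTerm α ε b c β x hc, hεb]
    simp only [t]
    field_simp [hβ N]
    linear_combination (poch α N * x ^ N * b / N !) * mul_poch_add_one β N +
      (poch β N * x ^ N * b / N !) * natCast_mul_poch α N
  simp only [hdiag]
  rw [div_eq_mul_one_div (1 - t), div_eq_mul_one_div t]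
  exact ((hasSum_poch_div_factorial_mul_pow α hx).mul_left _).add
    ((hasSum_poch_div_factorial_mul_pow (α + 1) hx).mul_left _)

theorem Gamma_add_one_div_Gamma {z : ℂ} (hz : notNonposInt z) : Gamma (z + 1) / Gamma z = z := by
  rw [Gamma_add_one z (by simpa using hz 0), mul_div_cancel_right₀ _ (Gamma_ne_zero hz)]

theorem sum_choose_mul_Gamma_div_Gamma (β : ℂ) (i : ℕ)
    (hΓ : ∀ r ≤ i, notNonposInt (β / 4 + ((r : ℂ) - 1) / 2)) :
    ∑ r ∈ range (i + 1), (i.choose r : ℂ) *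
        Gamma (β / 4 + ((r : ℂ) + 1) / 2) / Gamma (β / 4 + ((r : ℂ) - 1) / 2) =
      2 ^ i * (β - 2 + i) / 4 := by
  have hchoose : ∑ r ∈ range (i + 1), (i.choose r : ℂ) = 2 ^ i := mod_cast sum_range_choose i
  have hmul_choose : ∑ r ∈ range (i + 1), (r * i.choose r : ℂ) = i * 2 ^ i / 2 := by
    rw [eq_div_iff two_ne_zero]
    exact_mod_cast by rw [sum_range_mul_choose]; cases i <;> simp [pow_succ]; ring
  calc _ = ∑ r ∈ range (i + 1), ((β - 2) / 4 * i.choose r + r * i.choose r / 2 : ℂ) := by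
        refine sum_congr rfl fun r hr => ?_
        rw [mul_div_assoc,
          show β / 4 + ((r : ℂ) + 1) / 2 = β / 4 + ((r : ℂ) - 1) / 2 + 1 by ring,
          Gamma_add_one_div_Gamma (hΓ r (Nat.lt_succ_iff.mp (mem_range.mp hr)))]
        ring
    _ = 2 ^ i * (β - 2 + i) / 4 := by
        rw [sum_add_distrib, ← mul_sum, ← sum_div, hchoose, hmul_choose]
        ring

theorem inv_two_cpow (a : ℂ) : (2⁻¹ : ℂ) ^ a = (2 ^ a)⁻¹ :=
  inv_cpow _ _ (by simp [Real.pi_ne_zero.symm])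

theorem stmt_7_general (i : ℕ) (α β : ℂ)
    (hβ : ∀ m n : ℕ, poch β (m + n) ≠ 0)
    (hd : ∀ n : ℕ, poch (α / 2) n ≠ 0)
    (hΓs : ∀ r : ℕ, r ≤ i →
      notNonposInt (β / 4 + ((r : ℂ) + 1) / 2) ∧ notNonposInt (β / 4 + ((r : ℂ) - 1) / 2))
    (hsum : Summable fun p : ℕ × ℕ => ‖kdfTerm α (β / 2 + 2 - (i : ℂ)) (β / 2 - 2 + (i : ℂ)) (α / 2 + 1) β (α / 2) (1/2) (1/2) p‖) :
    (∑' p : ℕ × ℕ, kdfTerm α (β / 2 + 2 - (i : ℂ)) (β / 2 - 2 + (i : ℂ)) (α / 2 + 1) β (α / 2) (1/2) (1/2) p) =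
      (2 : ℂ) ^ (α + 3 - (i : ℂ)) / β *
      ∑ r ∈ Finset.range (i + 1), (i.choose r : ℂ) *
        Gamma (β / 4 + ((r : ℂ) + 1) / 2) /
        Gamma (β / 4 + ((r : ℂ) - 1) / 2) := by
  have hβ0 : β ≠ 0 := by simpa [poch] using hβ 1 0
  have hα0 : α ≠ 0 := by simpa [poch] using hd 1
  have hdiag := hasSum_sum_antidiagonal_kdfTerm α (β / 2 + 2 - i) (β / 2 - 2 + i) (α / 2) β
    (x := 1 / 2) (by norm_num) (fun n => by simpa using hβ n 0) hd (by ring)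
  rw [hsum.of_norm.hasSum.sum_antidiagonal.unique hdiag,
    sum_choose_mul_Gamma_div_Gamma β i fun r hr => (hΓs r hr).2,
    show (1 - 1 / 2 : ℂ) = 2⁻¹ by norm_num, inv_two_cpow, inv_two_cpow,
    cpow_add _ _ two_ne_zero, cpow_sub _ _ two_ne_zero, cpow_add _ _ two_ne_zero, cpow_one,
    cpow_natCast, cpow_ofNat]
  field_simp
  ring

theorem stmt_7 (i : ℕ) (α β : ℂ)
    (hβ0 : β ≠ 0)
    (hβ : ∀ m n : ℕ, poch β (m + n) ≠ 0)
    (hd : ∀ n : ℕ, poch (α / 2) n ≠ 0)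
    (hΓs : ∀ r : ℕ, r ≤ i →
      notNonposInt (β / 4 + ((r : ℂ) + 1) / 2) ∧ notNonposInt (β / 4 + ((r : ℂ) - 1) / 2))
    (hsum : Summable fun p : ℕ × ℕ => ‖kdfTerm α (β / 2 + 2 - (i : ℂ)) (β / 2 - 2 + (i : ℂ)) (α / 2 + 1) β (α / 2) (1/2) (1/2) p‖) :
    (∑' p : ℕ × ℕ, kdfTerm α (β / 2 + 2 - (i : ℂ)) (β / 2 - 2 + (i : ℂ)) (α / 2 + 1) β (α / 2) (1/2) (1/2) p) =
      (2 : ℂ) ^ (α + 3 - (i : ℂ)) / β *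
      ∑ r ∈ Finset.range (i + 1), (i.choose r : ℂ) *
        Gamma (β / 4 + ((r : ℂ) + 1) / 2) /
        Gamma (β / 4 + ((r : ℂ) - 1) / 2) :=
  stmt_7_general i α β hβ hd hΓs hsum
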